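/- Let A be a real n×n matrix, and suppose there exist a symmetric positive definite X and matrices such that the bounded-real-lemma LMI [[A X + X A^T + B B^T, X C^T + B D^T],[C X + D B^T, D D^T − γ² I]] < 0 holds for γ > 0 (equivalently, via Schur complement, A X + X A^T + B B^T + (X C^T + B D^T)(γ² I − D D^T)⁻¹(C X + D B^T) < 0 with γ² I − D D^T > 0). Then A is Hurwitz and the H∞ norm of G(s) = C(sI−A)⁻¹B + D, i.e., sup_{ω∈ℝ} σ_max(G(iω)), is strictly less than γ. -/

import Mathlib

/-!
The upper-left block of the LMI contains the Lyapunov inequality `A X + X Aᴴ < 0`. If `μ` is an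
eigenvalue of `A` and `Aᴴ w = conj μ • w` with `w ≠ 0`, then `w* (A X + X Aᴴ) w = 2 Re μ · w* X w`,
so `X > 0` forces `Re μ < 0`.

For `s = iω` and `G = C (sI - A)⁻¹ B + D`, evaluate the quadratic form of the LMI at `(ξ, u)` with
`ξ = (sI - A)⁻ᴴ Cᴴ u`. Since `Aᴴ ξ + Cᴴ u = -s ξ` and `Gᴴ u = Bᴴ ξ + Dᴴ u`, it equals
`‖Gᴴ u‖² - γ² ‖u‖²`: the cross term `2 Re (ξ* X (-s ξ))` vanishes because `s` is imaginary.
Strict feasibility gives a margin `LMI ≤ -δ I`, hence `‖Gᴴ u‖² ≤ (γ² - δ) ‖u‖²` uniformly in `ω`,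
and `σ_max (G (iω)) = ‖Gᴴ‖ ≤ √(γ² - δ) < γ`.
-/

open Matrix

/-- A real square matrix is Hurwitz if every (complex) eigenvalue has negative real part. -/
def Hurwitz {n : ℕ} (M : Matrix (Fin n) (Fin n) ℝ) : Prop :=
  ∀ μ ∈ spectrum ℂ (M.map (Complex.ofReal)), μ.re < 0

/-- The largest singular value of a complex matrix, as the operator norm of the induced
map between Euclidean spaces. -/
noncomputable def sigmaMax {m p : ℕ} (M : Matrix (Fin m) (Fin p) ℂ) : ℝ :=
  ‖LinearMap.toContinuousLinearMap (Matrix.toEuclideanLin M)‖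

open scoped MatrixOrder ComplexOrder

namespace Matrix

section RCLike

variable {𝕜 : Type*} [RCLike 𝕜]

lemma star_mulVec_dotProduct {m n : Type*} [Fintype m] [Fintype n] (M : Matrix m n 𝕜)
    (x : n → 𝕜) (y : m → 𝕜) : star (M *ᵥ x) ⬝ᵥ y = star x ⬝ᵥ (Mᴴ *ᵥ y) := by
  rw [star_mulVec, ← dotProduct_mulVec]

lemma norm_toLp_sq_eq_re_star_dotProduct {ι : Type*} [Fintype ι] (x : ι → 𝕜) :
    ‖WithLp.toLp 2 x‖ ^ 2 = RCLike.re (star x ⬝ᵥ x) := by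
  rw [← inner_self_eq_norm_sq (𝕜 := 𝕜), EuclideanSpace.inner_toLp_toLp, dotProduct_comm]

open scoped Matrix.Norms.L2Operator in
lemma l2_opNorm_le_sqrt_of_forall_re_star_dotProduct_le {m n : Type*} [Fintype m] [Fintype n]
    [DecidableEq n] (M : Matrix m n 𝕜) {K : ℝ}
    (h : ∀ x, RCLike.re (star (M *ᵥ x) ⬝ᵥ (M *ᵥ x)) ≤ K * RCLike.re (star x ⬝ᵥ x)) :
    ‖M‖ ≤ √K := by
  refine ContinuousLinearMap.opNorm_le_bound _ (Real.sqrt_nonneg K) fun x => ?_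
  have hx : ‖WithLp.toLp 2 (M *ᵥ x.ofLp)‖ ^ 2 ≤ K * ‖x‖ ^ 2 := by
    have := h x.ofLp
    rwa [← norm_toLp_sq_eq_re_star_dotProduct, ← norm_toLp_sq_eq_re_star_dotProduct,
      WithLp.toLp_ofLp] at this
  calc ‖WithLp.toLp 2 (M *ᵥ x.ofLp)‖ = √(‖WithLp.toLp 2 (M *ᵥ x.ofLp)‖ ^ 2) :=
        (Real.sqrt_sq (norm_nonneg _)).symm
    _ ≤ √(K * ‖x‖ ^ 2) := Real.sqrt_le_sqrt hx
    _ = √K * ‖x‖ := by rw [Real.sqrt_mul' _ (sq_nonneg _), Real.sqrt_sq (norm_nonneg _)]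

lemma PosSemidef.posDef_of_sub_smul_one {ι : Type*} [DecidableEq ι] {N : Matrix ι ι 𝕜} {δ : ℝ}
    (h : (N - δ • 1).PosSemidef) (hδ : 0 < δ) : N.PosDef := by
  simpa using (PosDef.one.smul hδ).add_posSemidef h

lemma PosDef.exists_pos_posSemidef_sub_smul_one {ι : Type*} [Fintype ι] [DecidableEq ι]
    {N : Matrix ι ι 𝕜} (hN : N.PosDef) : ∃ δ : ℝ, 0 < δ ∧ (N - δ • 1).PosSemidef := by
  cases isEmpty_or_nonempty ι
  · exact ⟨1, one_pos, by rw [Subsingleton.elim (N - (1 : ℝ) • 1) 0]; exact PosSemidef.zero⟩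
  obtain ⟨δ, hδ, hle⟩ := (CFC.exists_pos_algebraMap_le_iff hN.isHermitian.isSelfAdjoint).2
    fun x hx => hN.isStrictlyPositive.spectrum_pos hx
  exact ⟨δ, hδ, by simpa [Algebra.algebraMap_eq_smul_one, Matrix.le_iff] using hle⟩

variable {n p m : Type*} [Fintype n] [Fintype p]

lemma exists_conjTranspose_mulVec_eq_of_mem_spectrum [DecidableEq n] {A : Matrix n n 𝕜} {μ : 𝕜}
    (hμ : μ ∈ spectrum 𝕜 A) : ∃ w ≠ 0, Aᴴ *ᵥ w = star μ • w := by
  rw [spectrum.mem_iff, Algebra.algebraMap_eq_smul_one, isUnit_iff_isUnit_det,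
    isUnit_iff_ne_zero, not_not] at hμ
  have hdet : (μ • 1 - A)ᴴ.det = 0 := by rw [det_conjTranspose, hμ, star_zero]
  obtain ⟨w, hw0, hw⟩ := exists_mulVec_eq_zero_iff.mpr hdet
  refine ⟨w, hw0, ?_⟩
  rwa [conjTranspose_sub, conjTranspose_smul, conjTranspose_one, sub_mulVec, smul_mulVec,
    one_mulVec, sub_eq_zero, eq_comm] at hw

lemma re_neg_of_mem_spectrum_of_lyapunov [DecidableEq n] {A X : Matrix n n 𝕜} (hX : X.PosDef)
    (hL : (-(A * X + X * Aᴴ)).PosDef) {μ : 𝕜} (hμ : μ ∈ spectrum 𝕜 A) : RCLike.re μ < 0 := by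
  obtain ⟨w, hw0, hw⟩ := exists_conjTranspose_mulVec_eq_of_mem_spectrum hμ
  set q := star w ⬝ᵥ (X *ᵥ w)
  have hL_w : star w ⬝ᵥ ((A * X + X * Aᴴ) *ᵥ w) = ((2 * RCLike.re μ : ℝ) : 𝕜) * q := by
    have hwA : star w ⬝ᵥ (A *ᵥ (X *ᵥ w)) = μ * q := by
      rw [← conjTranspose_conjTranspose A, ← star_mulVec_dotProduct, hw, star_smul, star_star,
        smul_dotProduct, smul_eq_mul]
    rw [add_mulVec, ← mulVec_mulVec, ← mulVec_mulVec, dotProduct_add, hwA, hw, mulVec_smul,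
      dotProduct_smul, smul_eq_mul, ← add_mul, RCLike.star_def, RCLike.add_conj]
    push_cast; ring
  have hq : 0 < RCLike.re q := hX.re_dotProduct_pos hw0
  have h := hL.re_dotProduct_pos hw0
  rw [neg_mulVec, dotProduct_neg, map_neg, hL_w, RCLike.re_ofReal_mul] at h
  nlinarith

def boundedRealLMI [DecidableEq m] (A X : Matrix n n 𝕜) (B : Matrix n p 𝕜) (C : Matrix m n 𝕜)
    (D : Matrix m p 𝕜) (g : ℝ) : Matrix (n ⊕ m) (n ⊕ m) 𝕜 :=
  fromBlocks (A * X + X * Aᴴ + B * Bᴴ) (X * Cᴴ + B * Dᴴ) (C * X + D * Bᴴ) (D * Dᴴ - g • 1)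

noncomputable def transferMatrix [DecidableEq n] (A : Matrix n n 𝕜) (B : Matrix n p 𝕜)
    (C : Matrix m n 𝕜) (D : Matrix m p 𝕜) (s : 𝕜) : Matrix m p 𝕜 :=
  C * (s • 1 - A)⁻¹ * B + D

variable {A X : Matrix n n 𝕜} {B : Matrix n p 𝕜} {C : Matrix m n 𝕜} {D : Matrix m p 𝕜}

lemma PosDef.neg_lyapunov_of_boundedRealLMI [DecidableEq m] {g : ℝ}
    (h : (-boundedRealLMI A X B C D g).PosDef) : (-(A * X + X * Aᴴ)).PosDef := by
  have h₁₁ : (-(A * X + X * Aᴴ + B * Bᴴ)).PosDef := by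
    have h' : (-boundedRealLMI A X B C D g).toBlocks₁₁.PosDef := h.submatrix Sum.inl_injective
    rwa [boundedRealLMI, fromBlocks_neg, toBlocks_fromBlocks₁₁] at h'
  simpa using h₁₁.add_posSemidef (posSemidef_self_mul_conjTranspose B)

variable [Fintype m] [DecidableEq m]

lemma star_dotProduct_boundedRealLMI_mulVec (g : ℝ) (ξ : n → 𝕜) (u : m → 𝕜) :
    star (Sum.elim ξ u) ⬝ᵥ (boundedRealLMI A X B C D g *ᵥ Sum.elim ξ u) =
      star ξ ⬝ᵥ (X *ᵥ (Aᴴ *ᵥ ξ + Cᴴ *ᵥ u)) + star (Aᴴ *ᵥ ξ + Cᴴ *ᵥ u) ⬝ᵥ (X *ᵥ ξ) +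
      star (Bᴴ *ᵥ ξ + Dᴴ *ᵥ u) ⬝ᵥ (Bᴴ *ᵥ ξ + Dᴴ *ᵥ u) - g • (star u ⬝ᵥ u) := by
  simp only [boundedRealLMI, Function.star_sumElim, fromBlocks_mulVec, Sum.elim_comp_inl,
    Sum.elim_comp_inr, sumElim_dotProduct_sumElim, add_mulVec, sub_mulVec, ← mulVec_mulVec,
    smul_mulVec, one_mulVec, mulVec_add, star_add, dotProduct_add, add_dotProduct,
    dotProduct_sub, dotProduct_smul, star_mulVec_dotProduct, conjTranspose_conjTranspose]
  ring

lemma re_star_dotProduct_conjTranspose_transferMatrix_mulVec_le [DecidableEq n] {g δ : ℝ}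
    {s : 𝕜} (hs : star s = -s) (hS : IsUnit (s • 1 - A)) (hδ : 0 ≤ δ)
    (hM : (-boundedRealLMI A X B C D g - δ • 1).PosSemidef) (u : m → 𝕜) :
    RCLike.re (star ((transferMatrix A B C D s)ᴴ *ᵥ u) ⬝ᵥ ((transferMatrix A B C D s)ᴴ *ᵥ u))
      ≤ (g - δ) * RCLike.re (star u ⬝ᵥ u) := by
  set S := s • 1 - A
  set ξ := (S⁻¹)ᴴ *ᵥ (Cᴴ *ᵥ u)
  have hG : (transferMatrix A B C D s)ᴴ *ᵥ u = Bᴴ *ᵥ ξ + Dᴴ *ᵥ u := by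
    simp only [transferMatrix, conjTranspose_add, conjTranspose_mul, add_mulVec, mulVec_mulVec,
      ξ, S, Matrix.mul_assoc]
  have hη : Aᴴ *ᵥ ξ + Cᴴ *ᵥ u = -s • ξ := by
    have h : Sᴴ *ᵥ ξ = Cᴴ *ᵥ u := by
      rw [mulVec_mulVec, ← conjTranspose_mul, nonsing_inv_mul _ ((isUnit_iff_isUnit_det S).1 hS),
        conjTranspose_one, one_mulVec]
    rw [conjTranspose_sub, conjTranspose_smul, conjTranspose_one, hs, sub_mulVec, smul_mulVec,
      one_mulVec] at h
    rw [← h]; abel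
  have hquad : star (Sum.elim ξ u) ⬝ᵥ (boundedRealLMI A X B C D g *ᵥ Sum.elim ξ u) =
      star ((transferMatrix A B C D s)ᴴ *ᵥ u) ⬝ᵥ ((transferMatrix A B C D s)ᴴ *ᵥ u) -
        g • (star u ⬝ᵥ u) := by
    rw [star_dotProduct_boundedRealLMI_mulVec, hη, hG, mulVec_smul, dotProduct_smul, star_smul,
      smul_dotProduct, star_neg, hs, neg_neg, smul_eq_mul, smul_eq_mul]
    ring
  have hξ : 0 ≤ RCLike.re (star ξ ⬝ᵥ ξ) := (RCLike.nonneg_iff.1 (dotProduct_star_self_nonneg ξ)).1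
  have hmargin := hM.re_dotProduct_nonneg (Sum.elim ξ u)
  rw [sub_mulVec, neg_mulVec, smul_mulVec, one_mulVec, dotProduct_sub, dotProduct_neg, hquad,
    dotProduct_smul, Function.star_sumElim, sumElim_dotProduct_sumElim] at hmargin
  simp only [map_sub, map_neg, map_add, RCLike.smul_re] at hmargin
  linarith [mul_nonneg hδ hξ]

end RCLike

section OfReal

lemma map_ofReal_mul {l m n : Type*} [Fintype m] (M : Matrix l m ℝ) (N : Matrix m n ℝ) :
    (M * N).map Complex.ofReal = M.map Complex.ofReal * N.map Complex.ofReal :=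
  Matrix.map_mul (f := Complex.ofRealHom)

lemma map_ofReal_conjTranspose {m n : Type*} (M : Matrix m n ℝ) :
    Mᴴ.map Complex.ofReal = (M.map Complex.ofReal)ᴴ :=
  conjTranspose_map _ fun x => (Complex.conj_ofReal x).symm

variable {ι : Type*} [DecidableEq ι]

lemma map_ofReal_smul_one (δ : ℝ) : (δ • (1 : Matrix ι ι ℝ)).map Complex.ofReal = δ • 1 := by
  ext i j
  by_cases h : i = j <;> simp [h]

lemma map_ofReal_neg_sub_smul_one (N : Matrix ι ι ℝ) (δ : ℝ) :
    (-N - δ • 1).map Complex.ofReal = -N.map Complex.ofReal - δ • 1 := by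
  rw [Matrix.map_sub _ Complex.ofReal_sub, Matrix.map_neg _ Complex.ofReal_neg,
    map_ofReal_smul_one]

lemma map_ofReal_boundedRealLMI {n p m : Type*} [Fintype n] [Fintype p] [DecidableEq m]
    (A X : Matrix n n ℝ) (B : Matrix n p ℝ) (C : Matrix m n ℝ) (D : Matrix m p ℝ) (g : ℝ) :
    (boundedRealLMI A X B C D g).map Complex.ofReal =
      boundedRealLMI (A.map Complex.ofReal) (X.map Complex.ofReal) (B.map Complex.ofReal)
        (C.map Complex.ofReal) (D.map Complex.ofReal) g := by
  simp only [boundedRealLMI, fromBlocks_map, Matrix.map_add _ Complex.ofReal_add,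
    Matrix.map_sub _ Complex.ofReal_sub, map_ofReal_mul, map_ofReal_conjTranspose,
    map_ofReal_smul_one]

variable [Fintype ι]

lemma PosSemidef.map_ofReal {M : Matrix ι ι ℝ} (hM : M.PosSemidef) :
    (M.map Complex.ofReal).PosSemidef := by
  set S := CFC.sqrt M
  have hS : Sᴴ = S := (CFC.sqrt_nonneg M).isSelfAdjoint
  have hM' : M = Sᴴ * S := by rw [hS]; exact (CFC.sqrt_mul_sqrt_self M hM.nonneg).symm
  rw [hM', map_ofReal_mul, map_ofReal_conjTranspose]
  exact posSemidef_conjTranspose_mul_self _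

lemma PosDef.map_ofReal {M : Matrix ι ι ℝ} (hM : M.PosDef) : (M.map Complex.ofReal).PosDef := by
  obtain ⟨δ, hδ, hsub⟩ := hM.exists_pos_posSemidef_sub_smul_one
  have h := hsub.map_ofReal
  rw [Matrix.map_sub _ Complex.ofReal_sub, map_ofReal_smul_one] at h
  exact h.posDef_of_sub_smul_one hδ

end OfReal

end Matrix

lemma Hurwitz.of_lyapunov {n : ℕ} {A : Matrix (Fin n) (Fin n) ℝ} {X : Matrix (Fin n) (Fin n) ℂ}
    (hX : X.PosDef) (hL : (-(A.map Complex.ofReal * X + X * (A.map Complex.ofReal)ᴴ)).PosDef) :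
    Hurwitz A :=
  fun _ hμ => re_neg_of_mem_spectrum_of_lyapunov hX hL hμ

lemma Hurwitz.isUnit_smul_one_sub {n : ℕ} {A : Matrix (Fin n) (Fin n) ℝ} (hA : Hurwitz A)
    {s : ℂ} (hs : 0 ≤ s.re) : IsUnit (s • 1 - A.map Complex.ofReal) := by
  by_contra h
  exact (hA s (spectrum.mem_iff.2 (by rwa [Algebra.algebraMap_eq_smul_one]))).not_ge hs

open scoped Matrix.Norms.L2Operator in
lemma sigmaMax_transferMatrix_le {n p m : ℕ} {A X : Matrix (Fin n) (Fin n) ℂ}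
    {B : Matrix (Fin n) (Fin p) ℂ} {C : Matrix (Fin m) (Fin n) ℂ} {D : Matrix (Fin m) (Fin p) ℂ}
    {g δ : ℝ} {s : ℂ} (hs : star s = -s) (hS : IsUnit (s • 1 - A)) (hδ : 0 ≤ δ)
    (hM : (-boundedRealLMI A X B C D g - δ • 1).PosSemidef) :
    sigmaMax (transferMatrix A B C D s) ≤ √(g - δ) := by
  change ‖transferMatrix A B C D s‖ ≤ _
  rw [← l2_opNorm_conjTranspose]
  exact l2_opNorm_le_sqrt_of_forall_re_star_dotProduct_le _
    (re_star_dotProduct_conjTranspose_transferMatrix_mulVec_le hs hS hδ hM)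

/-- Bounded real lemma: feasibility of the H∞ LMI implies `A` is Hurwitz and
`sup_ω σ_max(G(iω)) < γ` for `G(s) = C (sI - A)⁻¹ B + D`. -/
theorem stmt5 {n m p : ℕ} (A : Matrix (Fin n) (Fin n) ℝ) (B : Matrix (Fin n) (Fin p) ℝ)
    (C : Matrix (Fin m) (Fin n) ℝ) (D : Matrix (Fin m) (Fin p) ℝ)
    (X : Matrix (Fin n) (Fin n) ℝ) (hX : X.PosDef) (γ : ℝ) (hγ : 0 < γ)
    (hLMI : (-(Matrix.fromBlocks
        (A * X + X * Aᵀ + B * Bᵀ) (X * Cᵀ + B * Dᵀ)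
        (C * X + D * Bᵀ) (D * Dᵀ - γ ^ 2 • (1 : Matrix (Fin m) (Fin m) ℝ)))).PosDef) :
    Hurwitz A ∧
      (⨆ ω : ℝ, sigmaMax ((C.map Complex.ofReal) *
          (((ω : ℂ) * Complex.I) • (1 : Matrix (Fin n) (Fin n) ℂ) - A.map Complex.ofReal)⁻¹ *
          (B.map Complex.ofReal) + D.map Complex.ofReal)) < γ := by
  -- over `ℝ`, `ᴴ` is `ᵀ` by definition
  have hLMI' : (-boundedRealLMI A X B C D (γ ^ 2)).PosDef := hLMI
  obtain ⟨δ, hδ, hmargin⟩ := hLMI'.exists_pos_posSemidef_sub_smul_one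
  have hmarginC : (-boundedRealLMI (A.map Complex.ofReal) (X.map Complex.ofReal)
      (B.map Complex.ofReal) (C.map Complex.ofReal) (D.map Complex.ofReal) (γ ^ 2) -
        δ • 1).PosSemidef := by
    simpa only [map_ofReal_neg_sub_smul_one, map_ofReal_boundedRealLMI] using hmargin.map_ofReal
  have hA : Hurwitz A :=
    .of_lyapunov hX.map_ofReal (hmarginC.posDef_of_sub_smul_one hδ).neg_lyapunov_of_boundedRealLMI
  have hbound : ∀ ω : ℝ, sigmaMax (transferMatrix (A.map Complex.ofReal) (B.map Complex.ofReal)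
      (C.map Complex.ofReal) (D.map Complex.ofReal) (ω * Complex.I)) ≤ √(γ ^ 2 - δ) := fun ω =>
    sigmaMax_transferMatrix_le (by simp) (hA.isUnit_smul_one_sub (by simp))
      hδ.le hmarginC
  exact ⟨hA, (ciSup_le hbound).trans_lt ((Real.sqrt_lt' hγ).2 (by linarith))⟩
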